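/- arXiv:math-ph/0506063 — 2 statements merged into one kernel-verified Lean document; each statement's English description precedes it below -/
import Mathlib

section
/- Let A be a complex symmetric d×d matrix (ᵗA = A) whose real part is positive definite, β ∈ ℂᵈ, and α ∈ ℕᵈ a multi-index with α = 0. Then A is invertible and ∫_{ℝᵈ} exp(-½⟨Ax,x⟩ + β·x) dx = (2π)^{d/2} det(A)^{-1/2} exp(½⟨A⁻¹β,β⟩), where det(A)^{-1/2} is the branch obtained by continuous deformation from the positive square root for positive definite real A. -/
/-!
Write `A = R + i S` with `R = Re A` positive definite and `S = Im A` symmetric. A real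
congruence `P` diagonalizes both at once (`Pᵀ R P = 1`, `Pᵀ S P` diagonal), so
`Pᵀ A P = diag (D i)` with `Re (D i) > 0`. The real substitution `x = P y` costs `|det P|`
and splits the integral into a product of one-dimensional Gaussians with complex
coefficients, each contributing `(2π)^{1/2} D_i^{-1/2}` with the principal power.
Then `s = |det P| ∏ D_i^{-1/2}` squares to `det P² / ∏ D_i = (det A)⁻¹`, and
`⟨(Pᵀ A P)⁻¹ Pᵀβ, Pᵀβ⟩ = ⟨A⁻¹β, β⟩` matches the exponents.
-/

open Matrix MeasureTheory
open scoped ComplexOrder Real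

namespace Matrix

variable {n : Type*} [Fintype n]

open scoped MatrixOrder in
theorem PosDef.exists_isUnit_conjTranspose_mul_mul_eq_one [DecidableEq n] {𝕜 : Type*}
    [RCLike 𝕜] {R : Matrix n n 𝕜} (hR : R.PosDef) :
    ∃ W : Matrix n n 𝕜, IsUnit W ∧ Wᴴ * R * W = 1 := by
  set Q := CFC.sqrt R
  have hQQ : Q * Q = R := CFC.sqrt_mul_sqrt_self R hR.posSemidef.nonneg
  have hQ : IsUnit Q.det :=
    (isUnit_iff_isUnit_det Q).mp (isUnit_of_mul_isUnit_left (hQQ ▸ hR.isUnit))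
  refine ⟨Q⁻¹, isUnit_nonsing_inv_iff.mpr ((isUnit_iff_isUnit_det Q).mpr hQ), ?_⟩
  rw [conjTranspose_nonsing_inv, (CFC.sqrt_nonneg R).posSemidef.1.eq]
  calc Q⁻¹ * R * Q⁻¹ = (Q⁻¹ * Q) * (Q * Q⁻¹) := by
        rw [← hQQ]; simp only [Matrix.mul_assoc]
    _ = 1 := by rw [nonsing_inv_mul Q hQ, mul_nonsing_inv Q hQ, Matrix.one_mul]

theorem PosDef.exists_isUnit_conjTranspose_mul_mul_eq_diagonal [DecidableEq n] {𝕜 : Type*}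
    [RCLike 𝕜] {R S : Matrix n n 𝕜} (hR : R.PosDef) (hS : S.IsHermitian) :
    ∃ (T : Matrix n n 𝕜) (ev : n → ℝ), IsUnit T ∧ Tᴴ * R * T = 1 ∧
      Tᴴ * S * T = diagonal (RCLike.ofReal ∘ ev) := by
  obtain ⟨W, hW, hWRW⟩ := hR.exists_isUnit_conjTranspose_mul_mul_eq_one
  have hS' : (Wᴴ * S * W).IsHermitian := isHermitian_conjTranspose_mul_mul W hS
  have hU := hS'.conjStarAlgAut_star_eigenvectorUnitary
  rw [Unitary.conjStarAlgAut_apply, Unitary.coe_star, star_star] at hU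
  have hUU := Unitary.coe_star_mul_self hS'.eigenvectorUnitary
  set U : Matrix n n 𝕜 := (hS'.eigenvectorUnitary : Matrix n n 𝕜)
  refine ⟨W * U, hS'.eigenvalues, hW.mul Unitary.isUnit_coe, ?_, ?_⟩
  · calc (W * U)ᴴ * R * (W * U) = star U * (Wᴴ * R * W) * U := by
          simp only [conjTranspose_mul, star_eq_conjTranspose, Matrix.mul_assoc]
      _ = 1 := by rw [hWRW, Matrix.mul_one, hUU]
  · rw [← hU]
    simp only [conjTranspose_mul, star_eq_conjTranspose, Matrix.mul_assoc]

theorem exists_transpose_mul_mul_eq_diagonal_of_re_posDef [DecidableEq n] {A : Matrix n n ℂ}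
    (hsym : Aᵀ = A) (hre : (A.map Complex.re).PosDef) :
    ∃ (P : Matrix n n ℝ) (D : n → ℂ), P.det ≠ 0 ∧ (∀ i, 0 < (D i).re) ∧
      (P.map (↑))ᵀ * A * P.map (↑) = diagonal D := by
  have hS : (A.map Complex.im).IsHermitian := by
    rw [IsHermitian, conjTranspose_eq_transpose_of_trivial, ← transpose_map, hsym]
  obtain ⟨P, ev, hP, hPRP, hPSP⟩ := hre.exists_isUnit_conjTranspose_mul_mul_eq_diagonal hS
  rw [conjTranspose_eq_transpose_of_trivial] at hPRP hPSP
  have hmul (M N : Matrix n n ℝ) :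
      (M * N).map ((↑) : ℝ → ℂ) = M.map (↑) * N.map (↑) :=
    Matrix.map_mul (f := Complex.ofRealHom)
  have hA : A = (A.map Complex.re).map (↑) + Complex.I • (A.map Complex.im).map (↑) := by
    ext i j
    simp [mul_comm Complex.I, Complex.re_add_im]
  refine ⟨P, fun i => 1 + ev i * Complex.I, ((isUnit_iff_isUnit_det P).mp hP).ne_zero,
    fun i => by simp, ?_⟩
  rw [hA, Matrix.mul_add, Matrix.add_mul, Matrix.mul_smul, Matrix.smul_mul, ← transpose_map,
    ← hmul, ← hmul, ← hmul, ← hmul, hPRP, hPSP]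
  ext i j
  rcases eq_or_ne i j with rfl | h
  · simp [mul_comm]
  · simp [h]

theorem mulVec_mulVec_dotProduct_mulVec {R : Type*} [CommSemiring R] (A P : Matrix n n R)
    (y : n → R) : (A *ᵥ (P *ᵥ y)) ⬝ᵥ (P *ᵥ y) = ((Pᵀ * A * P) *ᵥ y) ⬝ᵥ y := by
  rw [dotProduct_comm, dotProduct_comm _ y, mulVec_mulVec, ← vecMul_transpose,
    ← dotProduct_mulVec, mulVec_mulVec, Matrix.mul_assoc]

theorem mul_inv_transpose_mul_mul_mul_transpose [DecidableEq n] {R : Type*} [CommRing R]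
    (A : Matrix n n R) {P : Matrix n n R} (hP : IsUnit P.det) :
    P * (Pᵀ * A * P)⁻¹ * Pᵀ = A⁻¹ := by
  have hPt : IsUnit Pᵀ.det := by rwa [det_transpose]
  rw [mul_inv_rev, mul_inv_rev]
  calc P * (P⁻¹ * (A⁻¹ * Pᵀ⁻¹)) * Pᵀ = (P * P⁻¹) * A⁻¹ * (Pᵀ⁻¹ * Pᵀ) := by
        simp only [Matrix.mul_assoc]
    _ = A⁻¹ := by
        rw [mul_nonsing_inv P hP, nonsing_inv_mul _ hPt, Matrix.one_mul, Matrix.mul_one]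

theorem inv_mulVec_dotProduct_transpose_mul_mul [DecidableEq n] {R : Type*} [CommRing R]
    (A : Matrix n n R) {P : Matrix n n R} (hP : IsUnit P.det) (β : n → R) :
    ((Pᵀ * A * P)⁻¹ *ᵥ (Pᵀ *ᵥ β)) ⬝ᵥ (Pᵀ *ᵥ β) = (A⁻¹ *ᵥ β) ⬝ᵥ β := by
  rw [mulVec_mulVec_dotProduct_mulVec, transpose_transpose,
    mul_inv_transpose_mul_mul_mul_transpose A hP]

end Matrix

theorem Complex.ofReal_mul_cpow {r : ℝ} (hr : 0 < r) {z : ℂ} (hz : z ≠ 0) (w : ℂ) :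
    ((r : ℂ) * z) ^ w = (r : ℂ) ^ w * z ^ w := by
  have hr' : (r : ℂ) ≠ 0 := Complex.ofReal_ne_zero.mpr hr.ne'
  rw [Complex.cpow_def_of_ne_zero (mul_ne_zero hr' hz), Complex.log_ofReal_mul hr hz, add_mul,
    Complex.exp_add, ← Complex.cpow_def_of_ne_zero hz, Complex.ofReal_log hr.le,
    ← Complex.cpow_def_of_ne_zero hr']

theorem Complex.cpow_neg_half_sq (z : ℂ) : (z ^ (-(1/2) : ℂ)) ^ 2 = z⁻¹ := by
  rw [← Complex.cpow_nat_mul]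
  norm_num [Complex.cpow_neg_one]

section GaussianIntegral

variable {n : Type*} [Fintype n]

theorem integral_comp_mulVec [DecidableEq n] {E : Type*} [NormedAddCommGroup E]
    [NormedSpace ℝ E] {P : Matrix n n ℝ} (hP : P.det ≠ 0) (f : (n → ℝ) → E) :
    ∫ y, f (P *ᵥ y) = |P.det|⁻¹ • ∫ x, f x := by
  have hdet : LinearMap.det (toLin' P) ≠ 0 := by rwa [LinearMap.det_toLin']
  have hemb : MeasurableEmbedding (toLin' P) :=
    (LinearMap.isClosedEmbedding_of_injective (LinearMap.ker_eq_bot.mpr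
      (mulVec_injective_of_det_ne_zero hP))).measurableEmbedding
  rw [← abs_inv, ← ENNReal.toReal_ofReal (abs_nonneg P.det⁻¹), ← integral_smul_measure,
    ← LinearMap.det_toLin' P, ← Real.map_linearMap_volume_pi_eq_smul_volume_pi hdet,
    hemb.integral_map]
  rfl

noncomputable def gaussianIntegrand (A : Matrix n n ℂ) (β : n → ℂ) (x : n → ℝ) : ℂ :=
  Complex.exp (-(1/2) * (A *ᵥ fun i => (x i : ℂ)) ⬝ᵥ (fun i => (x i : ℂ))
    + β ⬝ᵥ fun i => (x i : ℂ))

theorem gaussianIntegrand_mulVec (A : Matrix n n ℂ) (β : n → ℂ) (P : Matrix n n ℝ)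
    (y : n → ℝ) :
    gaussianIntegrand A β (P *ᵥ y) = gaussianIntegrand
      ((P.map (↑))ᵀ * A * P.map (↑)) ((P.map (↑))ᵀ *ᵥ β) y := by
  have hcoe : (fun i => ((P *ᵥ y) i : ℂ)) = P.map (↑) *ᵥ fun i => (y i : ℂ) :=
    funext (RingHom.map_mulVec Complex.ofRealHom P y)
  rw [gaussianIntegrand, gaussianIntegrand, hcoe, mulVec_mulVec_dotProduct_mulVec,
    dotProduct_mulVec, mulVec_transpose]

theorem integral_gaussianIntegrand_eq_abs_det_smul [DecidableEq n] (A : Matrix n n ℂ)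
    (β : n → ℂ) {P : Matrix n n ℝ} (hP : P.det ≠ 0) :
    ∫ x, gaussianIntegrand A β x = |P.det| • ∫ y, gaussianIntegrand
      ((P.map (↑))ᵀ * A * P.map (↑)) ((P.map (↑))ᵀ *ᵥ β) y := by
  simp_rw [← gaussianIntegrand_mulVec, integral_comp_mulVec hP, smul_smul,
    mul_inv_cancel₀ (abs_ne_zero.mpr hP), one_smul]

theorem integral_gaussianIntegrand_diagonal [DecidableEq n] {D : n → ℂ}
    (hD : ∀ i, 0 < (D i).re) (γ : n → ℂ) :
    ∫ x, gaussianIntegrand (diagonal D) γ x =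
      (((2 * π) ^ ((Fintype.card n : ℝ) / 2) : ℝ) : ℂ) * (∏ i, D i ^ (-(1/2) : ℂ)) *
        Complex.exp ((1/2) * ((diagonal D)⁻¹ *ᵥ γ) ⬝ᵥ γ) := by
  have hD0 (i : n) : D i ≠ 0 := fun h => (hD i).ne' (by rw [h, Complex.zero_re])
  have hb (i : n) : 0 < (D i / 2).re := by simpa using hD i
  have hsum (x : n → ℝ) : gaussianIntegrand (diagonal D) γ x
      = Complex.exp (-∑ i, D i / 2 * (x i : ℂ) ^ 2 + ∑ i, γ i * x i) := by
    simp only [gaussianIntegrand, mulVec_diagonal, dotProduct, Finset.mul_sum,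
      ← Finset.sum_neg_distrib]
    congr 2
    exact Finset.sum_congr rfl fun i _ => by ring
  have hfactor (i : n) :
      (π / (D i / 2)) ^ (1/2 : ℂ) = ((2 * π) ^ (1/2 : ℝ) : ℝ) * D i ^ (-(1/2) : ℂ) := by
    have h2π : (0 : ℝ) < 2 * π := by positivity
    -- `0 < re (D i)` keeps `D i` off the branch cut of the principal power
    have harg : (D i).arg ≠ π := fun h => (hD i).not_ge (Complex.arg_eq_pi_iff.mp h).1.le
    rw [show (π : ℂ) / (D i / 2) = ((2 * π : ℝ) : ℂ) * (D i)⁻¹ by push_cast; field_simp,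
      Complex.ofReal_mul_cpow h2π (inv_ne_zero (hD0 i)), Complex.inv_cpow _ _ harg,
      Complex.cpow_neg, Complex.ofReal_cpow h2π.le]
    norm_num
  have hpow : ∏ _i : n, (((2 * π) ^ (1/2 : ℝ) : ℝ) : ℂ) =
      (((2 * π) ^ ((Fintype.card n : ℝ) / 2) : ℝ) : ℂ) := by
    rw [Finset.prod_const, Finset.card_univ, ← Complex.ofReal_pow, ← Real.rpow_natCast,
      ← Real.rpow_mul (by positivity)]
    ring_nf
  have hinv : (diagonal D)⁻¹ = diagonal fun i => (D i)⁻¹ := by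
    refine inv_eq_right_inv ?_
    rw [diagonal_mul_diagonal, ← diagonal_one]
    exact congrArg diagonal (funext fun i => mul_inv_cancel₀ (hD0 i))
  simp_rw [hsum, GaussianFourier.integral_cexp_neg_sum_mul_add hb, Finset.prod_mul_distrib,
    hfactor, Finset.prod_mul_distrib, hpow, ← Complex.exp_sum, hinv]
  simp only [dotProduct, mulVec_diagonal, Finset.mul_sum]
  congr 2
  refine Finset.sum_congr rfl fun i _ => ?_
  field_simp
  ring

end GaussianIntegral

/-- Gaussian integral with a complex symmetric matrix `A` whose real part is
positive definite: `A` is invertible and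
`∫_{ℝᵈ} exp(-½⟨Ax,x⟩ + β·x) dx = (2π)^{d/2} det(A)^{-1/2} exp(½⟨A⁻¹β,β⟩)`,
for a suitable square root `s` of `det(A)⁻¹` (the branch obtained by
continuous deformation from the positive square root on real positive
definite matrices). -/
theorem stmt6 {d : ℕ} (A : Matrix (Fin d) (Fin d) ℂ)
    (hsym : A.transpose = A)
    (hre : (A.map Complex.re).PosDef)
    (β : Fin d → ℂ) :
    IsUnit A ∧
    ∃ s : ℂ, s ^ 2 = (A.det)⁻¹ ∧
      (∫ x : EuclideanSpace ℝ (Fin d),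
          Complex.exp (-(1/2) * dotProduct
              (A.mulVec fun i => (x i : ℂ)) (fun i => (x i : ℂ))
            + dotProduct β (fun i => (x i : ℂ))))
        = (((2 * π) ^ ((d : ℝ) / 2) : ℝ) : ℂ) * s *
            Complex.exp ((1/2) * dotProduct (A⁻¹.mulVec β) β) := by
  obtain ⟨P, D, hP, hD, hPAP⟩ := exists_transpose_mul_mul_eq_diagonal_of_re_posDef hsym hre
  have hPc : (P.map (↑)).det = (P.det : ℂ) := (RingHom.map_det Complex.ofRealHom P).symm
  have hdet : (P.det : ℂ) ^ 2 * A.det = ∏ i, D i := by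
    rw [← det_diagonal, ← hPAP, det_mul, det_mul, det_transpose, hPc]
    ring
  have hAdet : A.det ≠ 0 := by
    refine right_ne_zero_of_mul (hdet ▸ Finset.prod_ne_zero_iff.mpr fun i _ => ?_)
    exact fun h => (hD i).ne' (by rw [h, Complex.zero_re])
  refine ⟨(isUnit_iff_isUnit_det A).mpr hAdet.isUnit, |P.det| * ∏ i, D i ^ (-(1/2) : ℂ),
    ?_, ?_⟩
  · have habs : ((|P.det| : ℝ) : ℂ) ^ 2 = (P.det : ℂ) ^ 2 := by
      rw [← Complex.ofReal_pow, sq_abs, Complex.ofReal_pow]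
    have hP' : (P.det : ℂ) ≠ 0 := Complex.ofReal_ne_zero.mpr hP
    rw [mul_pow, ← Finset.prod_pow, Finset.prod_congr rfl fun i _ => Complex.cpow_neg_half_sq (D i),
      Finset.prod_inv_distrib, ← hdet, habs]
    field_simp
  · calc _ = ∫ x, gaussianIntegrand A β x :=
          (EuclideanSpace.volume_preserving_symm_measurableEquiv_toLp (Fin d)).integral_comp' _
      _ = _ := by
        rw [integral_gaussianIntegrand_eq_abs_det_smul A β hP, hPAP,
          integral_gaussianIntegrand_diagonal hD, ← hPAP,
          inv_mulVec_dotProduct_transpose_mul_mul A (hPc ▸ (Complex.ofReal_ne_zero.mpr hP).isUnit),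
          Fintype.card_fin, Complex.real_smul]
        ring
end

section
/- Let g ∈ O(d,ℝ) be an orthogonal matrix, and let F̃_g := ker(g - I) with orthogonal projection Π_g onto F̃_g. Consider the 2d×2d complex matrix with blocks [[½(I-g)(I-g⁻¹) + Π_g, (1/(2i))(g - g⁻¹)],[-(1/(2i))(g - g⁻¹), ½(I-g)(I-g⁻¹) + Π_g]]. Its determinant equals det((I-g)|_{F̃_g^⊥})². -/
/-- Let `g` be a real orthogonal `d × d` matrix, `F̃_g = ker(g - I)` and `Π_g`
the orthogonal projection onto `F̃_g` (encoded as a symmetric idempotent real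
matrix whose fixed vectors are exactly those of `g`).  Then the determinant of
the complex `2d × 2d` block matrix
`[[½(I-g)(I-g⁻¹) + Π_g, (1/2i)(g - g⁻¹)], [-(1/2i)(g - g⁻¹), ½(I-g)(I-g⁻¹) + Π_g]]`
equals `det((I-g)|_{F̃_g^⊥})²`; the latter restricted determinant is encoded
as `det((I - g) + Π_g)`, since `I - g` vanishes on `F̃_g` and preserves
`F̃_g^⊥`, while `Π_g` is the identity on `F̃_g` and vanishes on `F̃_g^⊥`. -/
theorem stmt17 {d : ℕ} (g : Matrix (Fin d) (Fin d) ℝ)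
    (hg : g.transpose * g = 1)
    (Pg : Matrix (Fin d) (Fin d) ℝ)
    (hPsym : Pg.transpose = Pg) (hPidem : Pg * Pg = Pg)
    (hPrange : ∀ x : Fin d → ℝ, Pg.mulVec x = x ↔ g.mulVec x = x)
    (gc Pgc : Matrix (Fin d) (Fin d) ℂ)
    (hgc : gc = g.map (Complex.ofReal ·)) (hPgc : Pgc = Pg.map (Complex.ofReal ·)) :
    (Matrix.fromBlocks
        ((1/2 : ℂ) • ((1 - gc) * (1 - gc⁻¹)) + Pgc)
        ((1/(2 * Complex.I)) • (gc - gc⁻¹))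
        (-((1/(2 * Complex.I)) • (gc - gc⁻¹)))
        ((1/2 : ℂ) • ((1 - gc) * (1 - gc⁻¹)) + Pgc)).det
      = ((((1 - g) + Pg).det : ℝ) : ℂ) ^ 2 := by
  have hgc' : gc = Complex.ofRealHom.mapMatrix g := hgc
  have hPgc' : Pgc = Complex.ofRealHom.mapMatrix Pg := hPgc
  -- gc is orthogonal
  have hgcT : gc.transpose * gc = 1 := by
    rw [hgc', RingHom.mapMatrix_apply, ← Matrix.transpose_map, ← RingHom.mapMatrix_apply,
      ← RingHom.mapMatrix_apply, ← map_mul, hg, map_one]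
  have hinv : gc⁻¹ = gc.transpose := Matrix.inv_eq_left_inv hgcT
  have hmul : gc * gc⁻¹ = 1 := by
    rw [hinv, mul_eq_one_comm]; exact hgcT
  have hPT : Pgc.transpose = Pgc := by
    rw [hPgc', RingHom.mapMatrix_apply, ← Matrix.transpose_map, hPsym]
  set A : Matrix (Fin d) (Fin d) ℂ := (1/2 : ℂ) • ((1 - gc) * (1 - gc⁻¹)) + Pgc with hA
  set B : Matrix (Fin d) (Fin d) ℂ := (1/(2 * Complex.I)) • (gc - gc⁻¹) with hB
  have expand : (1 - gc) * (1 - gc⁻¹) = 1 - gc - gc⁻¹ + 1 := by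
    rw [mul_sub, sub_mul, sub_mul, mul_one, one_mul, hmul]; noncomm_ring
  have hI : Complex.I * (1/(2 * Complex.I)) = 1/2 := by
    field_simp
  have h1 : A + Complex.I • B = 1 - gc⁻¹ + Pgc := by
    rw [hA, hB, smul_smul, hI, expand]; module
  have h2 : A - Complex.I • B = 1 - gc + Pgc := by
    rw [hA, hB, smul_smul, hI, expand]; module
  -- block determinant
  have hS : (Matrix.fromBlocks 1 0 (Complex.I • 1) (1 : Matrix (Fin d) (Fin d) ℂ)) *
        (Matrix.fromBlocks A B (-B) A) *
        (Matrix.fromBlocks 1 0 (-(Complex.I • 1)) 1) =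
      Matrix.fromBlocks (A - Complex.I • B) B 0 (A + Complex.I • B) := by
    rw [Matrix.fromBlocks_multiply, Matrix.fromBlocks_multiply]
    simp [Matrix.smul_mul, Matrix.mul_smul, smul_smul, Complex.I_mul_I]
    exact ⟨by abel, by abel, by abel⟩
  have hdetS : (Matrix.fromBlocks A B (-B) A).det =
      (A - Complex.I • B).det * (A + Complex.I • B).det := by
    have := congrArg Matrix.det hS
    rw [Matrix.det_mul, Matrix.det_mul, Matrix.det_fromBlocks_zero₁₂,
      Matrix.det_fromBlocks_zero₁₂, Matrix.det_one, Matrix.det_fromBlocks_zero₂₁] at this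
    simpa using this
  rw [hdetS, h1, h2]
  have hT : (1 : Matrix (Fin d) (Fin d) ℂ) - gc⁻¹ + Pgc = (1 - gc + Pgc).transpose := by
    rw [Matrix.transpose_add, Matrix.transpose_sub, Matrix.transpose_one, hPT, hinv]
  rw [hT, Matrix.det_transpose]
  have hmap : (1 : Matrix (Fin d) (Fin d) ℂ) - gc + Pgc =
      Complex.ofRealHom.mapMatrix ((1 - g) + Pg) := by
    rw [map_add, map_sub, map_one, hgc', hPgc']
  rw [hmap, ← RingHom.map_det]
  simp [sq]
end
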